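/- The PF-D2 coefficient function d1 satisfies lim_{v→0⁺} d1(v) = 90987349/53222400 and lim_{v→0⁺} (d1(v) − 90987349/53222400)/v² = −16301796103/96864768000; in particular d1 tends to the corresponding coefficient of the classical Quinlan–Tremaine method as v → 0, and its v²-Taylor coefficient is three times that of the PF-D0 coefficient b1. -/

import Mathlib

/-!
With `b₁ = 90987349 / 53222400`, clearing denominators gives
`d₁(v) - b₁ = G(v, sin v, cos v, …, cos 6v) / D(v)` with `G` a polynomial and
`D(v) = 5120 v⁴ (cos v - 1)⁵ (cos v + 1)³ ~ -1280 v¹⁴`. Since `G` is smooth, replacing `sin` and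
`cos` by their Taylor polynomials of degrees 17 and 16 changes `G` by `O(v¹⁸)`, and the resulting
polynomial in `v` is exactly `v¹⁶` times a polynomial with constant term `16301796103 / 75675600`.
Hence `(d₁(v) - b₁) / v² → 16301796103 / 75675600 / (-1280)`.
-/

open Filter

/-- The variable coefficient `d₁(v)` of the method PF-D2 (phase lag and its first
and second derivatives vanish at frequency `v`). -/
noncomputable def pfd2d1 (v : ℝ) : ℝ :=
  ((-30720) * (v ^ 2 - 1) * Real.cos v
      - 10 * ((-387) / (Real.sin (v / 2)) ^ 6
        + 72 * (128 * Real.cos v + 127) / (Real.sin v) ^ 2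
        + 2048 * (v ^ 2 - 3))
      - 8 * ((-47) * v ^ 4 - 2040 * v ^ 2
          - 40 * v * ((22 * Real.cos v + 22 * Real.cos (2 * v) + 9 * Real.cos (3 * v)
              + 14 * Real.cos (4 * v) + 8 * Real.cos (5 * v) - 5 * Real.cos (6 * v) + 11)
              * (Real.tan (v / 2)) ^ 3 - 27 * v ^ 3) / (Real.cos v - 1)
          + (4817 * v ^ 4 + 3120 * v ^ 2 + 4410) * Real.cos v
          - 2205 * Real.cos (2 * v) - 2205) / (Real.cos v - 1) ^ 4)
    / (5120 * v ^ 4)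

open Topology Asymptotics Finset Nat Real

theorem norm_sub_sum_range_le_of_hasSum {E : Type*} [NormedAddCommGroup E]
    {f : ℕ → E} {g : ℕ → ℝ} {s : E} {t C : ℝ} (hf : HasSum f s) (hg : HasSum g t) (n : ℕ)
    (h : ∀ i, ‖f (i + n)‖ ≤ C * g i) : ‖s - ∑ i ∈ range n, f i‖ ≤ C * t :=
  ((hasSum_nat_add_iff' n).mpr hf).norm_le_of_bounded (hg.mul_left C) h

noncomputable def cosTaylor (n : ℕ) (x : ℝ) : ℝ :=
  ∑ i ∈ range n, (-1) ^ i * x ^ (2 * i) / (2 * i)!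

noncomputable def sinTaylor (n : ℕ) (x : ℝ) : ℝ :=
  ∑ i ∈ range n, (-1) ^ i * x ^ (2 * i + 1) / (2 * i + 1)!

theorem abs_cos_sub_cosTaylor_le (n : ℕ) (x : ℝ) :
    |cos x - cosTaylor n x| ≤ |x| ^ (2 * n) * cosh x := by
  rw [← cosh_abs, ← Real.norm_eq_abs]
  refine norm_sub_sum_range_le_of_hasSum (hasSum_cos x) (hasSum_cosh |x|) n fun i => ?_
  rw [Real.norm_eq_abs, abs_div, abs_mul, abs_pow, abs_pow, abs_neg, abs_one, one_pow, one_mul,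
    Nat.abs_cast, show 2 * (i + n) = 2 * n + 2 * i by ring, pow_add, mul_div_assoc]
  gcongr
  omega

theorem abs_sin_sub_sinTaylor_le (n : ℕ) (x : ℝ) :
    |sin x - sinTaylor n x| ≤ |x| ^ (2 * n + 1) * cosh x := by
  rw [← cosh_abs, ← Real.norm_eq_abs]
  refine norm_sub_sum_range_le_of_hasSum (hasSum_sin x) (hasSum_cosh |x|) n fun i => ?_
  rw [Real.norm_eq_abs, abs_div, abs_mul, abs_pow, abs_pow, abs_neg, abs_one, one_pow, one_mul,
    Nat.abs_cast, show 2 * (i + n) + 1 = 2 * n + 1 + 2 * i by ring, pow_add, mul_div_assoc]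
  gcongr
  omega

theorem isBigO_pow_of_abs_le_pow_mul_cosh {f : ℝ → ℝ} {m : ℕ}
    (h : ∀ x, |f x| ≤ |x| ^ m * cosh x) : f =O[𝓝 0] (· ^ m) := by
  have hcosh : (fun x => cosh x) =O[𝓝 0] (fun _ => (1 : ℝ)) :=
    continuous_cosh.continuousAt.isBigO_one ℝ
  have hpow : (fun x : ℝ => x ^ m * cosh x) =O[𝓝 0] (· ^ m) := by
    simpa using (isBigO_refl (fun x : ℝ => x ^ m) (𝓝 0)).mul hcosh
  refine (IsBigO.of_bound 1 (Eventually.of_forall fun x => ?_)).trans hpow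
  simpa [abs_of_pos (cosh_pos x)] using h x

theorem cos_sub_cosTaylor_isBigO (n : ℕ) :
    (fun x => cos x - cosTaylor n x) =O[𝓝 0] (· ^ (2 * n)) :=
  isBigO_pow_of_abs_le_pow_mul_cosh (abs_cos_sub_cosTaylor_le n)

theorem sin_sub_sinTaylor_isBigO (n : ℕ) :
    (fun x => sin x - sinTaylor n x) =O[𝓝 0] (· ^ (2 * n + 1)) :=
  isBigO_pow_of_abs_le_pow_mul_cosh (abs_sin_sub_sinTaylor_le n)

theorem ContDiffAt.isBigO_comp_sub_comp {𝕜 E F α : Type*} [RCLike 𝕜] [NormedAddCommGroup E]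
    [NormedSpace 𝕜 E] [NormedAddCommGroup F] [NormedSpace 𝕜 F] {G : E → F} {p : E}
    (hG : ContDiffAt 𝕜 1 G p)
    {l : Filter α} {x y : α → E} (hx : Tendsto x l (𝓝 p)) (hy : Tendsto y l (𝓝 p)) :
    (fun t => G (x t) - G (y t)) =O[l] fun t => x t - y t :=
  (hG.hasStrictFDerivAt one_ne_zero).isBigO_sub.comp_tendsto (hx.prodMk_nhds hy)

theorem cosTaylor_nine (x : ℝ) :
    cosTaylor 9 x = 1 - x ^ 2 / 2 + x ^ 4 / 24 - x ^ 6 / 720 + x ^ 8 / 40320 - x ^ 10 / 3628800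
      + x ^ 12 / 479001600 - x ^ 14 / 87178291200 + x ^ 16 / 20922789888000 := by
  norm_num [cosTaylor, sum_range_succ, Nat.factorial, sub_eq_add_neg, div_eq_mul_inv]

theorem sinTaylor_nine (x : ℝ) :
    sinTaylor 9 x = x - x ^ 3 / 6 + x ^ 5 / 120 - x ^ 7 / 5040 + x ^ 9 / 362880
      - x ^ 11 / 39916800 + x ^ 13 / 6227020800 - x ^ 15 / 1307674368000
      + x ^ 17 / 355687428096000 := by
  norm_num [sinTaylor, sum_range_succ, Nat.factorial, sub_eq_add_neg, div_eq_mul_inv]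

namespace PFD2

/-- With `s = sin v` and `c k = cos (k v)`, `numer v s c / denom v (cos v)` is `pfd2d1 v` with
its denominators cleared through `sin² (v/2) = (1 - cos v) / 2`, `sin² v = 1 - cos² v` and
`tan (v/2) = sin v / (1 + cos v)`. -/
def numer (v s : ℝ) (c : Fin 7 → ℝ) : ℝ :=
  (c 1 - 1) ^ 5 * (c 1 + 1) ^ 3 * (-30720 * (v ^ 2 - 1) * c 1 - 20480 * (v ^ 2 - 3))
    - 30960 * (c 1 - 1) ^ 2 * (c 1 + 1) ^ 3
    + 720 * (128 * c 1 + 127) * (c 1 - 1) ^ 4 * (c 1 + 1) ^ 2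
    - 8 * ((c 1 - 1) * (c 1 + 1) ^ 3
        * (-47 * v ^ 4 - 2040 * v ^ 2 + (4817 * v ^ 4 + 3120 * v ^ 2 + 4410) * c 1
          - 2205 * c 2 - 2205)
      - 40 * v * ((22 * c 1 + 22 * c 2 + 9 * c 3 + 14 * c 4 + 8 * c 5 - 5 * c 6 + 11) * s ^ 3
        - 27 * v ^ 3 * (c 1 + 1) ^ 3))

def denom (v c : ℝ) : ℝ :=
  5120 * v ^ 4 * (c - 1) ^ 5 * (c + 1) ^ 3

noncomputable def shiftedNumer (p : ℝ × ℝ × (Fin 7 → ℝ)) : ℝ :=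
  numer p.1 p.2.1 p.2.2 - 90987349 / 53222400 * denom p.1 (p.2.2 1)

noncomputable def trigPoint (v : ℝ) : ℝ × ℝ × (Fin 7 → ℝ) :=
  (v, sin v, fun k => cos (k * v))

noncomputable def taylorPoint (v : ℝ) : ℝ × ℝ × (Fin 7 → ℝ) :=
  (v, sinTaylor 9 v, fun k => cosTaylor 9 (k * v))

theorem pfd2d1_sub_eq {v : ℝ} (hv : sin v ≠ 0) :
    pfd2d1 v - 90987349 / 53222400 = shiftedNumer (trigPoint v) / denom v (cos v) := by
  have hv2 : v = 2 * (v / 2) := by ring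
  have hsin_sq : sin v ^ 2 = -((cos v - 1) * (cos v + 1)) := by rw [sin_sq]; ring
  obtain ⟨hc₁, hc₂⟩ : cos v - 1 ≠ 0 ∧ cos v + 1 ≠ 0 :=
    mul_ne_zero_iff.mp (neg_ne_zero.mp (hsin_sq ▸ pow_ne_zero 2 hv))
  have hsin_half_sq : sin (v / 2) ^ 2 = -(cos v - 1) / 2 := by
    rw [sin_sq_eq_half_sub, ← hv2]; ring
  have htan_half : tan (v / 2) = sin v / (cos v + 1) := by
    have hcos_half : cos (v / 2) ≠ 0 := by
      refine fun h => hv ?_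
      rw [hv2, sin_two_mul, h, mul_zero]
    rw [tan_eq_sin_div_cos, hv2, sin_two_mul, cos_two_mul, ← hv2]
    field_simp
    ring
  have hv0 : v ≠ 0 := by rintro rfl; simp at hv
  simp only [pfd2d1, shiftedNumer, trigPoint, numer, denom, Fin.isValue, Fin.coe_ofNat_eq_mod,
    Nat.reduceMod, Nat.one_mod, Nat.cast_ofNat, Nat.cast_one, one_mul]
  rw [show sin (v / 2) ^ 6 = (sin (v / 2) ^ 2) ^ 3 by ring, hsin_half_sq, htan_half, hsin_sq]
  field_simp
  ring

theorem tendsto_cos_sub_one_div_sq :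
    Tendsto (fun v => (cos v - 1) / v ^ 2) (𝓝[≠] 0) (𝓝 (-1 / 2)) := by
  have h := ((cos_sub_cosTaylor_isBigO 2).trans_isLittleO
    (isLittleO_pow_pow (by norm_num : 2 < 2 * 2))).tendsto_div_nhds_zero
  refine (((h.mono_left nhdsWithin_le_nhds).const_add (-1 / 2)).congr' ?_).trans (by simp)
  filter_upwards [self_mem_nhdsWithin] with v (hv : v ≠ 0)
  rw [show cosTaylor 2 v = 1 - v ^ 2 / 2 by
    norm_num [cosTaylor, sum_range_succ, sub_eq_add_neg, div_eq_mul_inv]]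
  field_simp
  ring

theorem tendsto_denom_div_pow :
    Tendsto (fun v => denom v (cos v) / v ^ 14) (𝓝[≠] 0) (𝓝 (-1280)) := by
  have hcos : Tendsto (fun v => cos v + 1) (𝓝[≠] 0) (𝓝 2) :=
    ((continuous_cos.tendsto' 0 1 cos_zero).mono_left nhdsWithin_le_nhds).add_const 1 |>.trans
      (by norm_num)
  have h := ((tendsto_cos_sub_one_div_sq.pow 5).const_mul 5120).mul (hcos.pow 3)
  refine (h.congr' ?_).trans (by norm_num)
  filter_upwards [self_mem_nhdsWithin] with v (hv : v ≠ 0)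
  simp only [denom]
  field_simp

-- Obtained by exact division of the polynomial `shiftedNumer (taylorPoint v)` by `v ^ 16`.
noncomputable def taylorQuotient (v : ℝ) : ℝ :=
  16301796103/75675600 - 236068820287/908107200 * v ^ 2 + 830097402171377/5557616064000 * v ^ 4
    - 5223259819031561/66691392768000 * v ^ 6 + 324493152050328739/11411638318080000 * v ^ 8
    - 2079371190358580603/308114234588160000 * v ^ 10
    + 69910498006530498593/62115829692973056000 * v ^ 12
    - 56464514198768171807/395836169612083200000 * v ^ 14
    + 21241655964623938365421/1453510414815569510400000 * v ^ 16
    - 285181513366048112696683/225721617359594323968000000 * v ^ 18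
    + 25957822769845163684058497/273980899151075590432358400000 * v ^ 20
    - 82424848317893316454965617/13151083159251628340753203200000 * v ^ 22
    + 351115186426275086211311609/949800450390395380165509120000000 * v ^ 24
    - 84380257131446863712661597587/4308294842970833444430749368320000000 * v ^ 26
    + 1045435072588557702898855487/1115088077004215715029135130624000000 * v ^ 28
    - 12641129215404704487773551519/310197228693900007999013954519040000000 * v ^ 30
    + 55130452486425634247806369099/34121695156329000879891534997094400000000 * v ^ 32
    - 10089313272812773695434259143309/171973343587898164434653336385355776000000000 * v ^ 34
    + 440414745420770441351979317773/224888218538020676568392824503926784000000000 * v ^ 36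
    - 11344980442629166625740093600919611/188130239217981196983289017338759951155200000000000 * v ^ 38
    + 3879488010294895571184346025165869/2257562870615774363799468208065119413862400000000000 * v ^ 40
    - 8619080858503225594780970064005057/189635281131725046559155329477470030764441600000000000 * v ^ 42
    + 1591215475581232667977678630623347/1422264608487937849193664971081025230733312000000000000 * v ^ 44
    - 6139559715307518646974970801459519/238940454225973558664535715141612238763196416000000000000 * v ^ 46
    + 11701877472383021461236101288767781/21203455433834292264684850015927943204532387840000000000000 * v ^ 48
    - 224248568829864264059686068185569879/20185689573010246235979977215163401930714833223680000000000000 * v ^ 50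
    + 356076476294441161330582166752336987/1695597924132860683822318086073725762180045990789120000000000000 * v ^ 52
    - 23936818139620508059342643702921/6409459746365964609836915215887422554837195161600000000000000 * v ^ 54
    + 13478724281569965011458411852717/215357847477896410890520351253817397842529757429760000000000000 * v ^ 56
    - 6783467689133001344016274281239/6852295147023976710152920267166917204080492281856000000000000000 * v ^ 58
    + 441730890195181720199253431357371/29848597660436442549426120683779091340974624379764736000000000000000 * v ^ 60
    - 7283278828045923882734739259/34788575361814035605391749048693579651485576200192000000000000000 * v ^ 62
    + 40201405152579983723159085514427/14327326877009492423724537928213963843667819702287073280000000000000000 * v ^ 64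
    - 21460554385679994683076181590767/601747728834398681796430592984986481434048427496057077760000000000000000 * v ^ 66
    + 201944040655658427088865422400299/469363228490830971801215862528289455518557773446924520652800000000000000000 * v ^ 68
    - 6942548979746652985180722167387/1408089685472492915403647587584868366555673320340773561958400000000000000000 * v ^ 70
    + 93162111862310809544760757004693/1734766492502111271777293827904557827596589530659833028332748800000000000000000 * v ^ 72
    - 7895130051360448043941759794733/14193544029562728587268767682855473134881187069034997504540672000000000000000000 * v ^ 74
    + 2053791393867600860139873962983/374709562380456034703895466827384490760863338622523934119873740800000000000000000 * v ^ 76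
    - 192565696801726902795904850149/3747095623804560347038954668273844907608633386225239341198737408000000000000000000 * v ^ 78
    + 32133033057059960141611727759/70075554523098271425144087302783593077356260729407073393846517760000000000000000000 * v ^ 80
    - 716941602777899843534678581589/184132278953756095453494232398976738759888244599108261226505956229120000000000000000000 * v ^ 82
    + 3058303550323661101048774961287/97221843287583218399444954706659718065220993148329161927595144888975360000000000000000000 * v ^ 84
    - 506188715055748934691443364503/2094008932347946242449583639835747773712452160117858872286664659147161600000000000000000000 * v ^ 86
    + 576895723210273135219367188979/326665393446279613822135047814376652699142536978385984076719686826957209600000000000000000000 * v ^ 88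
    - 8008328776994120861747442197/653330786892559227644270095628753305398285073956771968153439373653914419200000000000000000000 * v ^ 90
    + 1266333098747890883574073357/15679938885421421463462482295090079329558841774962527235682544967693946060800000000000000000000 * v ^ 92
    - 553798580719002574357844759/1097595721979499502442373760656305553069118924247376906497778147738576224256000000000000000000000 * v ^ 94
    + 511112518332017259533380577/171224932628801922381010306662383666278782552182590797413653391047217890983936000000000000000000000 * v ^ 96
    - 28588462476392594732614663/1712249326288019223810103066623836662787825521825907974136533910472178909839360000000000000000000000 * v ^ 98
    + 3899885522974758692266711/44255059510213419938476510029662239899746875025654236869990414916819393362001920000000000000000000000 * v ^ 100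
    - 125953071344390710116583/287657886816387229600097315192804559348354687666752539654937696959326056853012480000000000000000000000 * v ^ 102
    + 35250628182682279192757/17259473208983233776005838911568273560901281260005152379296261817559563411180748800000000000000000000000 * v ^ 104
    - 61536799742363322667/6903789283593293510402335564627309424360512504002060951718504727023825364472299520000000000000000000000 * v ^ 106
    + 4290014947424478523/118350673433027888749754323965039590131894500068606759172317223891837006248096563200000000000000000000000 * v ^ 108
    - 103042185095083234421/753893789768387651335935043657302189140167965437025055927660716191001729800375107584000000000000000000000000 * v ^ 110
    + 4296655744856093951/9046725477220651816031220523887626269682015585244300671131928594292020757604501291008000000000000000000000000 * v ^ 112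
    - 27307786265762081/18093450954441303632062441047775252539364031170488601342263857188584041515209002582016000000000000000000000000 * v ^ 114
    + 150892050704165321/34739425832527302973559886811728484875578939847338114577146605802081359709201284957470720000000000000000000000000 * v ^ 116
    - 9630334607/861592902592443030098211478465488216160191960499457206774469389932573405486142980096000000000000000000000000 * v ^ 118
    + 1394027/55141945765916353926285534621791245834252285471965261233566040955684697951113150726144000000000000000000000 * v ^ 120
    - 1127111/22975810735798480802618972759079685764271785613318858847319183731535290812963812802560000000000000000000000000 * v ^ 122
    + 456103/5789904305421217162259981135288080812596489974556352429524434300346893284866880826245120000000000000000000000000 * v ^ 124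
    - 127/1286645401204714924946662474508462402799219994345856095449874288965976285525973516943360000000000000000000000000 * v ^ 126
    + 2161/25012386599419658140963118504444509110416836690083442495545556177498578990624925169378918400000000000000000000000000 * v ^ 128
    - 1/25012386599419658140963118504444509110416836690083442495545556177498578990624925169378918400000000000000000000000000 * v ^ 130

theorem shiftedNumer_taylorPoint (v : ℝ) :
    shiftedNumer (taylorPoint v) = v ^ 16 * taylorQuotient v := by
  simp only [shiftedNumer, taylorPoint, numer, denom, cosTaylor_nine, sinTaylor_nine, Fin.isValue,
    Fin.coe_ofNat_eq_mod, Nat.reduceMod, Nat.one_mod, Nat.cast_ofNat, Nat.cast_one, one_mul,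
    taylorQuotient]
  ring

theorem trigPoint_sub_taylorPoint_isBigO :
    (fun v => trigPoint v - taylorPoint v) =O[𝓝 0] (· ^ 18) := by
  simp only [trigPoint, taylorPoint, Prod.mk_sub_mk, sub_self]
  refine (isBigO_zero _ _).prod_left (((sin_sub_sinTaylor_isBigO 9).trans
    (isLittleO_pow_pow (by norm_num)).isBigO).prod_left (isBigO_pi.mpr fun k => ?_))
  have hk : Tendsto (fun v : ℝ => (k : ℝ) * v) (𝓝 0) (𝓝 0) :=
    (continuous_const_mul _).tendsto' 0 0 (mul_zero _)
  refine ((cos_sub_cosTaylor_isBigO 9).comp_tendsto hk).trans ?_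
  simp only [Function.comp_def, mul_pow]
  exact (isBigO_refl _ _).const_mul_left _

theorem tendsto_shiftedNumer_trigPoint_div :
    Tendsto (fun v => shiftedNumer (trigPoint v) / v ^ 16) (𝓝[≠] 0)
      (𝓝 (16301796103 / 75675600)) := by
  have hG : ContDiff ℝ 1 shiftedNumer := by unfold shiftedNumer numer denom; fun_prop
  have htrig : Continuous trigPoint := by unfold trigPoint; fun_prop
  have htaylor : Tendsto taylorPoint (𝓝 0) (𝓝 (trigPoint 0)) := by
    refine Continuous.tendsto' (by unfold taylorPoint cosTaylor sinTaylor; fun_prop) 0 _ ?_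
    simp [taylorPoint, trigPoint, cosTaylor, sinTaylor, sum_range_succ]
  have hgap :
      (fun v => shiftedNumer (trigPoint v) - shiftedNumer (taylorPoint v)) =o[𝓝 0] (· ^ 16) :=
    ((hG.contDiffAt.isBigO_comp_sub_comp (htrig.tendsto 0) htaylor).trans
      trigPoint_sub_taylorPoint_isBigO).trans_isLittleO (isLittleO_pow_pow (by norm_num))
  have hquot : Tendsto taylorQuotient (𝓝[≠] 0) (𝓝 (16301796103 / 75675600)) := by
    refine (Continuous.tendsto' ?_ 0 _ ?_).mono_left nhdsWithin_le_nhds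
    · unfold taylorQuotient; fun_prop
    · norm_num [taylorQuotient]
  refine (((hgap.tendsto_div_nhds_zero.mono_left nhdsWithin_le_nhds).add hquot).congr' ?_).trans
    (by rw [zero_add])
  filter_upwards [self_mem_nhdsWithin] with v (hv : v ≠ 0)
  rw [shiftedNumer_taylorPoint]
  field_simp
  ring

theorem tendsto_pfd2d1_sub_div_sq :
    Tendsto (fun v => (pfd2d1 v - 90987349 / 53222400) / v ^ 2) (𝓝[≠] 0)
      (𝓝 (-16301796103 / 96864768000)) := by
  have hsin : ∀ᶠ v in 𝓝[≠] 0, sin v ≠ 0 := by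
    filter_upwards [self_mem_nhdsWithin,
      nhdsWithin_le_nhds (Ioo_mem_nhds (neg_neg_of_pos pi_pos) pi_pos)] with v hv hvπ
    exact fun h => hv ((sin_eq_zero_iff_of_lt_of_lt hvπ.1 hvπ.2).mp h)
  have h := tendsto_shiftedNumer_trigPoint_div.div tendsto_denom_div_pow (by norm_num)
  refine (h.congr' ?_).trans (by norm_num)
  filter_upwards [hsin, self_mem_nhdsWithin] with v hv (hv0 : v ≠ 0)
  rw [Pi.div_apply, pfd2d1_sub_eq hv, show v ^ 16 = v ^ 14 * v ^ 2 by ring]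
  field_simp

end PFD2

/-- The PF-D2 coefficient `d₁` tends to the classical Quinlan–Tremaine coefficient
as `v → 0⁺`, and its `v²`-Taylor coefficient is three times that of the PF-D0
coefficient `b₁`. -/
theorem pfd2_d1_limit :
    Tendsto pfd2d1 (nhdsWithin 0 (Set.Ioi 0)) (nhds (90987349 / 53222400)) ∧
    Tendsto (fun v : ℝ => (pfd2d1 v - 90987349 / 53222400) / v ^ 2)
      (nhdsWithin 0 (Set.Ioi 0)) (nhds (-16301796103 / 96864768000)) := by
  have h := PFD2.tendsto_pfd2d1_sub_div_sq.mono_left (nhdsGT_le_nhdsNE 0)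
  refine ⟨?_, h⟩
  have hsq : Tendsto (fun v : ℝ => v ^ 2) (𝓝[>] 0) (𝓝 0) :=
    ((continuous_pow 2).tendsto' 0 0 (zero_pow two_ne_zero)).mono_left nhdsWithin_le_nhds
  refine (((hsq.mul h).const_add (90987349 / 53222400)).congr' ?_).trans (by simp)
  filter_upwards [self_mem_nhdsWithin] with v (hv : 0 < v)
  field_simp
  ring
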